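/- arXiv:1202.6180 — 8 statements merged into one kernel-verified Lean document; each statement's English description precedes it below -/
import Mathlib

section
/- Let X be a set and let P be a nonempty sublattice of 2^{P(X)}, equipped with the subspace topology inherited from the product topology on 2^{P(X)}. Then P is compact if and only if P is a complete sublattice of 2^{P(X)}, i.e., for every nonempty subset S of P, both ⋃S and ⋂S belong to P. -/
/-- The Cantor-cube topology on `Set (Set X)` (identifying `𝒫(𝒫(X))` with `2^{𝒫(X)}`):
the product topology, whose subbasic open sets are
`A⁺ = {x | A ∈ x}` and `A⁻ = {x | A ∉ x}` for `A ⊆ X`. -/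
def cantorTop (X : Type*) : TopologicalSpace (Set (Set X)) :=
  TopologicalSpace.generateFrom
    ({U | ∃ A : Set X, U = {x : Set (Set X) | A ∈ x}} ∪
     {U | ∃ A : Set X, U = {x : Set (Set X) | A ∉ x}})

open scoped Topology

/-!
The Cantor topology is the product of discrete two-point spaces, hence compact Hausdorff, so `P` is
compact iff it is closed; and `x` lies in the closure of `P` iff on every finite set of
coordinates `x` agrees with some member of `P`. On finitely many coordinates, `⋃₀ S` (resp. `⋂₀ S`)
agrees with the union (intersection) of a finite subfamily of `S`, which lies in the sublattice `P`:
so a closed sublattice is complete. Conversely, if `P` is complete and `x` is in its closure, then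
`x = ⋃_{A ∈ x} ⋂₀ {p ∈ P | A ∈ p}`, or `x = ⋂₀ P` when `x = ∅`, and either way `x ∈ P`.
-/

open TopologicalSpace Set

attribute [local instance] cantorTop

theorem mem_closure_pi_iff_forall_finset {ι : Type*} {π : ι → Type*}
    [∀ i, TopologicalSpace (π i)] [∀ i, DiscreteTopology (π i)] {P : Set (∀ i, π i)}
    {x : ∀ i, π i} : x ∈ closure P ↔ ∀ F : Finset ι, ∃ p ∈ P, ∀ i ∈ F, p i = x i := by
  simp only [mem_closure_iff_nhds, nhds_pi, nhds_discrete, Filter.mem_pi', Filter.mem_pure]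
  constructor
  · intro h F
    obtain ⟨p, hp, hpP⟩ := h _ ⟨F, fun i => {x i}, fun i => rfl, le_rfl⟩
    exact ⟨p, hpP, hp⟩
  · rintro h t ⟨F, u, hxu, hut⟩
    obtain ⟨p, hpP, hp⟩ := h F
    exact ⟨p, hut fun i hi => hp i hi ▸ hxu i, hpP⟩

section CantorCube

variable {X : Type*}

lemma isOpen_setOf_mem (A : Set X) : IsOpen {x : Set (Set X) | A ∈ x} :=
  GenerateOpen.basic _ (Or.inl ⟨A, rfl⟩)

lemma isOpen_setOf_notMem (A : Set X) : IsOpen {x : Set (Set X) | A ∉ x} :=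
  GenerateOpen.basic _ (Or.inr ⟨A, rfl⟩)

-- The instance `TopologicalSpace Prop` is Sierpiński space, hence the explicit discrete `⊥`.
lemma cantorTop_eq_pi :
    cantorTop X = @Pi.topologicalSpace (Set X) (fun _ => Prop) (fun _ => ⊥) := by
  let _ : TopologicalSpace Prop := ⊥
  have : DiscreteTopology Prop := ⟨rfl⟩
  apply le_antisymm
  · refine le_iInf fun A => continuous_iff_le_induced.1 <| continuous_discrete_rng.2 fun p => ?_
    rcases Classical.propComplete p with rfl | rfl
    · convert isOpen_setOf_mem A using 1
      ext x; exact ⟨of_eq_true, eq_true⟩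
    · convert isOpen_setOf_notMem A using 1
      ext x; exact ⟨of_eq_false, eq_false⟩
  · refine le_generateFrom ?_
    rintro _ (⟨A, rfl⟩ | ⟨A, rfl⟩)
    · exact (continuous_apply (A := fun _ => Prop) A).isOpen_preimage {p | p} (isOpen_discrete _)
    · exact (continuous_apply (A := fun _ => Prop) A).isOpen_preimage {p | ¬p} (isOpen_discrete _)

lemma compactSpace_cantorTop : CompactSpace (Set (Set X)) := by
  rw [cantorTop_eq_pi]
  let _ : TopologicalSpace Prop := ⊥
  exact Pi.compactSpace

lemma t2Space_cantorTop : T2Space (Set (Set X)) := by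
  rw [cantorTop_eq_pi]
  let _ : TopologicalSpace Prop := ⊥
  have : DiscreteTopology Prop := ⟨rfl⟩
  exact Pi.t2Space

lemma mem_closure_iff_forall_finset {P : Set (Set (Set X))} {x : Set (Set X)} :
    x ∈ closure P ↔ ∀ F : Finset (Set X), ∃ p ∈ P, ∀ A ∈ F, (A ∈ p ↔ A ∈ x) := by
  let _ : TopologicalSpace Prop := ⊥
  have : DiscreteTopology Prop := ⟨rfl⟩
  rw [cantorTop_eq_pi]
  have h := mem_closure_pi_iff_forall_finset (P := P) (x := x)
  simp only [eq_iff_iff] at h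
  exact h

variable {P S : Set (Set (Set X))}

lemma sUnion_mem_closure (hP : SupClosed P) (hSP : S ⊆ P) (hS : S.Nonempty) :
    ⋃₀ S ∈ closure P := by
  classical
  obtain ⟨s₀, hs₀⟩ := hS
  have hwitness : ∀ A, ∃ s ∈ S, A ∈ ⋃₀ S → A ∈ s := fun A => by
    by_cases hA : A ∈ ⋃₀ S
    · obtain ⟨s, hs, hAs⟩ := hA
      exact ⟨s, hs, fun _ => hAs⟩
    · exact ⟨s₀, hs₀, fun h => absurd h hA⟩
  choose t htS hAt using hwitness
  refine mem_closure_iff_forall_finset.2 fun F => ?_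
  let T := insert s₀ (F.image t)
  have hTS : (T : Set (Set (Set X))) ⊆ S := by
    simp only [T, Finset.coe_insert, Finset.coe_image, insert_subset_iff, image_subset_iff]
    exact ⟨hs₀, fun A _ => htS A⟩
  refine ⟨⋃₀ T, hP.sSup_mem_of_nonempty T.finite_toSet ⟨s₀, by simp [T]⟩ (hTS.trans hSP),
    fun A hA => ⟨fun h => sUnion_mono hTS h, fun h => ⟨t A, ?_, hAt A h⟩⟩⟩
  exact Finset.mem_insert_of_mem (Finset.mem_image_of_mem t hA)

lemma sInter_mem_closure (hP : InfClosed P) (hSP : S ⊆ P) (hS : S.Nonempty) :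
    ⋂₀ S ∈ closure P := by
  classical
  obtain ⟨s₀, hs₀⟩ := hS
  have hwitness : ∀ A, ∃ s ∈ S, A ∈ s → A ∈ ⋂₀ S := fun A => by
    by_cases hA : A ∈ ⋂₀ S
    · exact ⟨s₀, hs₀, fun _ => hA⟩
    · obtain ⟨s, hs, hAs⟩ : ∃ s ∈ S, A ∉ s := by simpa using hA
      exact ⟨s, hs, fun h => absurd h hAs⟩
  choose t htS hAt using hwitness
  refine mem_closure_iff_forall_finset.2 fun F => ?_
  let T := insert s₀ (F.image t)
  have hTS : (T : Set (Set (Set X))) ⊆ S := by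
    simp only [T, Finset.coe_insert, Finset.coe_image, insert_subset_iff, image_subset_iff]
    exact ⟨hs₀, fun A _ => htS A⟩
  refine ⟨⋂₀ T, hP.sInf_mem_of_nonempty T.finite_toSet ⟨s₀, by simp [T]⟩ (hTS.trans hSP),
    fun A hA => ⟨fun h => hAt A (h (t A) ?_), fun h => sInter_mono hTS h⟩⟩
  exact Finset.mem_insert_of_mem (Finset.mem_image_of_mem t hA)

lemma sInter_subset_of_mem_closure {x : Set (Set X)} (hx : x ∈ closure P) : ⋂₀ P ⊆ x :=
  fun A hA => by
    obtain ⟨p, hpP, hp⟩ := mem_closure_iff_forall_finset.1 hx {A}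
    exact (hp A (Finset.mem_singleton_self A)).1 (hA p hpP)

lemma sInter_setOf_mem_subset_of_mem_closure {x : Set (Set X)} (hx : x ∈ closure P) {A : Set X}
    (hA : A ∈ x) : ⋂₀ {p ∈ P | A ∈ p} ⊆ x := fun B hB => by
  obtain ⟨p, hpP, hp⟩ := mem_closure_iff_forall_finset.1 hx {A, B}
  exact (hp B (by simp)).1 (hB p ⟨hpP, (hp A (by simp)).2 hA⟩)

lemma nonempty_setOf_mem_of_mem_closure {x : Set (Set X)} (hx : x ∈ closure P) {A : Set X}
    (hA : A ∈ x) : {p ∈ P | A ∈ p}.Nonempty := by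
  obtain ⟨p, hpP, hp⟩ := mem_closure_iff_forall_finset.1 hx {A}
  exact ⟨p, hpP, (hp A (Finset.mem_singleton_self A)).2 hA⟩

lemma isClosed_of_forall_sUnion_mem_sInter_mem (hP : P.Nonempty)
    (hcomplete : ∀ S ⊆ P, S.Nonempty → ⋃₀ S ∈ P ∧ ⋂₀ S ∈ P) : IsClosed P := by
  refine closure_subset_iff_isClosed.1 fun x hx => ?_
  rcases x.eq_empty_or_nonempty with rfl | ⟨A₀, hA₀⟩
  · rw [← subset_empty_iff.1 (sInter_subset_of_mem_closure hx)]
    exact (hcomplete P subset_rfl hP).2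
  · set S := (fun A => ⋂₀ {p ∈ P | A ∈ p}) '' x
    have hSP : S ⊆ P := by
      rintro _ ⟨A, hA, rfl⟩
      exact (hcomplete _ (fun p hp => hp.1) (nonempty_setOf_mem_of_mem_closure hx hA)).2
    have hx_eq : ⋃₀ S = x := by
      refine subset_antisymm ?_ fun A hA => ⟨_, mem_image_of_mem _ hA, fun p hp => hp.2⟩
      rintro B ⟨_, ⟨A, hA, rfl⟩, hB⟩
      exact sInter_setOf_mem_subset_of_mem_closure hx hA hB
    rw [← hx_eq]
    exact (hcomplete S hSP ⟨_, mem_image_of_mem _ hA₀⟩).1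

end CantorCube

theorem stmt1 {X : Type*} (P : Set (Set (Set X))) (hP : P.Nonempty)
    (hlat : ∀ a ∈ P, ∀ b ∈ P, a ∪ b ∈ P ∧ a ∩ b ∈ P) :
    @IsCompact _ (cantorTop X) P ↔
      ∀ S ⊆ P, S.Nonempty → ⋃₀ S ∈ P ∧ ⋂₀ S ∈ P := by
  have := compactSpace_cantorTop (X := X)
  have := t2Space_cantorTop (X := X)
  refine ⟨fun hcomp S hSP hS => ?_,
    fun hcomplete => (isClosed_of_forall_sUnion_mem_sInter_mem hP hcomplete).isCompact⟩
  rw [← hcomp.isClosed.closure_eq]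
  exact ⟨sUnion_mem_closure (fun a ha b hb => (hlat a ha b hb).1) hSP hS,
    sInter_mem_closure (fun a ha b hb => (hlat a ha b hb).2) hSP hS⟩
end

section
/- Let X be a set and let P be a nonempty sublattice of 2^{P(X)}. For every x ∈ P, the sets {y ∈ P : x ⊆ y} and {y ∈ P : y ⊆ x} are closed in the subspace topology on P inherited from 2^{P(X)} (so the interval topology on P is coarser than the subspace topology). Moreover, if P is a complete sublattice of 2^{P(X)}, then the subspace topology on P coincides with the interval topology, i.e., with the topology whose closed sets are generated by the subbasis {{y ∈ P : x ⊆ y} : x ∈ P} ∪ {{y ∈ P : y ⊆ x} : x ∈ P} ∪ {P, ∅}. -/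
open scoped Topology

/-- The interval topology on a subset `P` of `2^{𝒫(X)}`: the topology whose closed sets
are generated by the subbasis of principal up-sets and down-sets of points of `P`
(together with `P` and `∅`); equivalently, the topology generated by the complements of
the principal up-sets and down-sets. -/
def intervalTop {X : Type*} (P : Set (Set (Set X))) : TopologicalSpace ↥P :=
  TopologicalSpace.generateFrom
    ({U | ∃ x : ↥P, U = {y : ↥P | ¬ (x : Set (Set X)) ⊆ (y : Set (Set X))}} ∪
     {U | ∃ x : ↥P, U = {y : ↥P | ¬ (y : Set (Set X)) ⊆ (x : Set (Set X))}})

/-!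
In the Cantor cube the up-set `{z | x ⊆ z}` is the intersection of the clopen sets `A⁺`, `A ∈ x`,
and the down-set `{z | z ⊆ x}` that of the clopen sets `A⁻`, `A ∉ x`; so both are closed, and so
are their traces on `P`. Conversely, if `P` has all nonempty unions and intersections, the
subbasic sets of the Cantor cube are open in the interval topology: unless it is all of `P`,
`A⁺ ∩ P` is the complement of the down-set of `⋃₀ {z ∈ P | A ∉ z}`, and `A⁻ ∩ P` is the
complement of the up-set of `⋂₀ {z ∈ P | A ∈ z}`.
-/

open TopologicalSpace

section CantorCube

variable {X : Type*}

lemma cantorTop_isClosed_setOf_mem (A : Set X) :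
    IsClosed[cantorTop X] {z : Set (Set X) | A ∈ z} := by
  let _ := cantorTop X
  exact ⟨isOpen_generateFrom_of_mem (Or.inr ⟨A, rfl⟩)⟩

lemma cantorTop_isClosed_setOf_not_mem (A : Set X) :
    IsClosed[cantorTop X] {z : Set (Set X) | A ∉ z} := by
  let _ := cantorTop X
  have h : IsOpen[cantorTop X] {z : Set (Set X) | A ∈ z} :=
    isOpen_generateFrom_of_mem (Or.inl ⟨A, rfl⟩)
  exact ⟨by simpa only [Set.compl_ofPred, not_not] using h⟩

lemma cantorTop_isClosed_setOf_superset (x : Set (Set X)) :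
    IsClosed[cantorTop X] {z : Set (Set X) | x ⊆ z} := by
  have h : {z : Set (Set X) | x ⊆ z} = ⋂ A ∈ x, {z : Set (Set X) | A ∈ z} := by
    ext z; simp [Set.subset_def]
  rw [h]
  exact @isClosed_biInter _ _ (cantorTop X) _ _ fun A _ => cantorTop_isClosed_setOf_mem A

lemma cantorTop_isClosed_setOf_subset (x : Set (Set X)) :
    IsClosed[cantorTop X] {z : Set (Set X) | z ⊆ x} := by
  have h : {z : Set (Set X) | z ⊆ x} = ⋂ A ∈ xᶜ, {z : Set (Set X) | A ∉ z} := by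
    ext z; simp only [Set.mem_ofPred_eq, Set.mem_iInter, Set.mem_compl_iff]; grind
  rw [h]
  exact @isClosed_biInter _ _ (cantorTop X) _ _ fun A _ => cantorTop_isClosed_setOf_not_mem A

end CantorCube

section IntervalTopology

variable {X : Type*} {P : Set (Set (Set X))}

lemma intervalTop_isOpen_setOf_mem (hsup : ∀ S ⊆ P, S.Nonempty → ⋃₀ S ∈ P) (A : Set X) :
    IsOpen[intervalTop P] {y : ↥P | A ∈ (y : Set (Set X))} := by
  by_cases hS : {z ∈ P | A ∉ z}.Nonempty
  · let M : ↥P := ⟨⋃₀ {z ∈ P | A ∉ z}, hsup _ (fun z hz => hz.1) hS⟩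
    have hAM : A ∉ (M : Set (Set X)) := by
      rintro ⟨z, hz, hAz⟩; exact hz.2 hAz
    have h : {y : ↥P | A ∈ (y : Set (Set X))} = {y : ↥P | ¬ (y : Set (Set X)) ⊆ M} := by
      ext y
      refine ⟨fun hAy hyM => hAM (hyM hAy), fun hyM => ?_⟩
      by_contra hAy
      exact hyM (Set.subset_sUnion_of_mem ⟨y.2, hAy⟩)
    rw [h]
    exact isOpen_generateFrom_of_mem (Or.inr ⟨M, rfl⟩)
  · have h : {y : ↥P | A ∈ (y : Set (Set X))} = Set.univ :=
      Set.eq_univ_of_forall fun y => by_contra fun hAy => hS ⟨y, y.2, hAy⟩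
    rw [h]
    exact (intervalTop P).isOpen_univ

lemma intervalTop_isOpen_setOf_not_mem (hinf : ∀ S ⊆ P, S.Nonempty → ⋂₀ S ∈ P) (A : Set X) :
    IsOpen[intervalTop P] {y : ↥P | A ∉ (y : Set (Set X))} := by
  by_cases hS : {z ∈ P | A ∈ z}.Nonempty
  · let m : ↥P := ⟨⋂₀ {z ∈ P | A ∈ z}, hinf _ (fun z hz => hz.1) hS⟩
    have hAm : A ∈ (m : Set (Set X)) := fun z hz => hz.2
    have h : {y : ↥P | A ∉ (y : Set (Set X))} = {y : ↥P | ¬ (m : Set (Set X)) ⊆ y} := by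
      ext y
      exact ⟨fun hAy hmy => hAy (hmy hAm),
        fun hmy hAy => hmy (Set.sInter_subset_of_mem ⟨y.2, hAy⟩)⟩
    rw [h]
    exact isOpen_generateFrom_of_mem (Or.inl ⟨m, rfl⟩)
  · have h : {y : ↥P | A ∉ (y : Set (Set X))} = Set.univ :=
      Set.eq_univ_of_forall fun y hAy => hS ⟨y, y.2, hAy⟩
    rw [h]
    exact (intervalTop P).isOpen_univ

end IntervalTopology

theorem stmt2_general {X : Type*} (P : Set (Set (Set X))) :
    (∀ x ∈ P,
      @IsClosed ↥P (TopologicalSpace.induced Subtype.val (cantorTop X))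
        {y : ↥P | x ⊆ (y : Set (Set X))} ∧
      @IsClosed ↥P (TopologicalSpace.induced Subtype.val (cantorTop X))
        {y : ↥P | (y : Set (Set X)) ⊆ x}) ∧
    ((∀ S ⊆ P, S.Nonempty → ⋃₀ S ∈ P ∧ ⋂₀ S ∈ P) →
      TopologicalSpace.induced Subtype.val (cantorTop X) = intervalTop P) := by
  let _ := cantorTop X
  let _ := induced (Subtype.val : ↥P → Set (Set X)) (cantorTop X)
  have hup (x : Set (Set X)) : IsClosed {y : ↥P | x ⊆ (y : Set (Set X))} :=
    (cantorTop_isClosed_setOf_superset x).preimage continuous_induced_dom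
  have hdown (x : Set (Set X)) : IsClosed {y : ↥P | (y : Set (Set X)) ⊆ x} :=
    (cantorTop_isClosed_setOf_subset x).preimage continuous_induced_dom
  refine ⟨fun x _ => ⟨hup x, hdown x⟩, fun hcomp => le_antisymm ?_ ?_⟩
  · refine le_generateFrom ?_
    rintro _ (⟨x, rfl⟩ | ⟨x, rfl⟩)
    exacts [(hup x).isOpen_compl, (hdown x).isOpen_compl]
  · rw [cantorTop, induced_generateFrom_eq]
    refine le_generateFrom ?_
    rintro _ ⟨_, (⟨A, rfl⟩ | ⟨A, rfl⟩), rfl⟩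
    exacts [intervalTop_isOpen_setOf_mem (fun S hS hne => (hcomp S hS hne).1) A,
      intervalTop_isOpen_setOf_not_mem (fun S hS hne => (hcomp S hS hne).2) A]

theorem stmt2 {X : Type*} (P : Set (Set (Set X))) (hP : P.Nonempty)
    (hlat : ∀ a ∈ P, ∀ b ∈ P, a ∪ b ∈ P ∧ a ∩ b ∈ P) :
    (∀ x ∈ P,
      @IsClosed ↥P (TopologicalSpace.induced Subtype.val (cantorTop X))
        {y : ↥P | x ⊆ (y : Set (Set X))} ∧
      @IsClosed ↥P (TopologicalSpace.induced Subtype.val (cantorTop X))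
        {y : ↥P | (y : Set (Set X)) ⊆ x}) ∧
    ((∀ S ⊆ P, S.Nonempty → ⋃₀ S ∈ P ∧ ⋂₀ S ∈ P) →
      TopologicalSpace.induced Subtype.val (cantorTop X) = intervalTop P) :=
  stmt2_general P
end

section
/- Let X be a set, let P be an infinite sublattice of 2^{P(X)}, and let x ∈ 2^{P(X)} be a limit point of P (every neighbourhood of x meets P ∖ {x}). Then there is a nonempty family (S_j)_{j∈J} of infinite subsets of P ∖ {x} such that x = ⋂_{j∈J} ⋃S_j, where ⋃S_j denotes the union of the members of S_j. -/
open scoped Topology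

/-!
A limit point `x` of `P` in the T1 space `2^{𝒫(X)}` is a limit point of `U ∩ P` for every
neighbourhood `U` of `x`, so each `(U ∩ P) \ {x}` is infinite. Moreover `x` is recovered as the
intersection over all neighbourhoods `U` of `⋃₀ ((U ∩ P) \ {x})`: for `A ∈ x` the neighbourhood
`U ∩ A⁺` meets `P \ {x}`, while for `A ∉ x` no member of `A⁻ ∩ P` contains `A`.
-/

open Set Filter

namespace CantorTop

attribute [local instance] cantorTop

variable {X : Type*}

lemma isOpen_setOf_mem (A : Set X) : IsOpen {x : Set (Set X) | A ∈ x} :=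
  TopologicalSpace.isOpen_generateFrom_of_mem (Or.inl ⟨A, rfl⟩)

lemma isOpen_setOf_notMem (A : Set X) : IsOpen {x : Set (Set X) | A ∉ x} :=
  TopologicalSpace.isOpen_generateFrom_of_mem (Or.inr ⟨A, rfl⟩)

instance t1Space : T1Space (Set (Set X)) := by
  rw [t1Space_iff_exists_open]
  intro x y hxy
  obtain ⟨A, hA⟩ : ∃ A, ¬(A ∈ x ↔ A ∈ y) := by simpa [Set.ext_iff] using hxy
  by_cases hAx : A ∈ x
  · exact ⟨_, isOpen_setOf_mem A, hAx, fun hAy => hA (iff_of_true hAx hAy)⟩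
  · exact ⟨_, isOpen_setOf_notMem A, hAx, fun hAy => hA (iff_of_false hAx hAy)⟩

lemma eq_biInter_nhds_sUnion_of_accPt {P : Set (Set (Set X))} {x : Set (Set X)}
    (hx : AccPt x (𝓟 P)) : x = ⋂ U ∈ 𝓝 x, ⋃₀ ((U ∩ P) \ {x}) := by
  ext A
  simp only [mem_iInter, mem_sUnion]
  constructor
  · intro hA U hU
    obtain ⟨y, ⟨⟨hyU, hAy⟩, hyP⟩, hyx⟩ := accPt_iff_nhds.mp hx _
      (inter_mem hU ((isOpen_setOf_mem A).mem_nhds hA))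
    exact ⟨y, ⟨⟨hyU, hyP⟩, hyx⟩, hAy⟩
  · intro h
    by_contra hA
    obtain ⟨y, ⟨⟨hAy, -⟩, -⟩, hAy'⟩ := h _ ((isOpen_setOf_notMem A).mem_nhds hA)
    exact hAy hAy'

end CantorTop

theorem stmt3_general {X : Type*} (P : Set (Set (Set X)))
    (x : Set (Set X))
    (hx : ∀ U : Set (Set (Set X)), IsOpen[cantorTop X] U → x ∈ U →
      ∃ y ∈ P, y ∈ U ∧ y ≠ x) :
    ∃ 𝒮 : Set (Set (Set (Set X))), 𝒮.Nonempty ∧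
      (∀ S ∈ 𝒮, S ⊆ P \ {x} ∧ S.Infinite) ∧
      x = ⋂ S ∈ 𝒮, ⋃₀ S := by
  let := cantorTop X
  have hacc : AccPt x (𝓟 P) := accPt_iff_nhds.mpr fun U hU => by
    obtain ⟨V, hVU, hV, hxV⟩ := mem_nhds_iff.mp hU
    obtain ⟨y, hyP, hyV, hyx⟩ := hx V hV hxV
    exact ⟨y, ⟨hVU hyV, hyP⟩, hyx⟩
  refine ⟨(fun U => (U ∩ P) \ {x}) '' (𝓝 x).sets, ⟨_, mem_image_of_mem _ univ_mem⟩, ?_, ?_⟩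
  · rintro _ ⟨U, hU, rfl⟩
    refine ⟨sdiff_subset_sdiff_left inter_subset_right, ?_⟩
    exact (Infinite.of_accPt (hacc.nhds_inter hU)).sdiff (finite_singleton x)
  · rw [biInter_image]
    exact CantorTop.eq_biInter_nhds_sUnion_of_accPt hacc

theorem stmt3 {X : Type*} (P : Set (Set (Set X)))
    (hlat : ∀ a ∈ P, ∀ b ∈ P, a ∪ b ∈ P ∧ a ∩ b ∈ P)
    (hinf : P.Infinite) (x : Set (Set X))
    (hx : ∀ U : Set (Set (Set X)), IsOpen[cantorTop X] U → x ∈ U →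
      ∃ y ∈ P, y ∈ U ∧ y ≠ x) :
    ∃ 𝒮 : Set (Set (Set (Set X))), 𝒮.Nonempty ∧
      (∀ S ∈ 𝒮, S ⊆ P \ {x} ∧ S.Infinite) ∧
      x = ⋂ S ∈ 𝒮, ⋃₀ S :=
  stmt3_general P x hx
end

section
/- Let X be an infinite set and let {A_i : i ∈ ℕ} be any countable family of subsets of X. Then there exists a family L ⊆ P(X) such that: ∅ ∈ L and X ∈ L; A_i ∈ L for every i; L is closed under unions and intersections of pairs of its elements; and L is not closed under arbitrary unions, i.e., there is a subset S ⊆ L with ⋃S ∉ L. In particular the countable intersection ⋂_{i∈ℕ} A_i⁺ of subbasic open sets in 2^{P(X)} contains a bounded sublattice of P(X) that is not a topology on X. -/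
/-! The sublattice of `Set X` generated by `∅`, `univ`, the `A i` and all singletons has at most
`#X` elements, because a finitely generated sublattice of a distributive lattice is finite. Hence
it misses some `W ⊆ X`, although it contains the singletons whose union is `W`. -/

open Set
open scoped Cardinal

section

variable {α : Type*} [DistribLattice α]

lemma latticeClosure_subset_iUnion_finset (s : Set α) :
    latticeClosure s ⊆ ⋃ t : Finset s, latticeClosure (Subtype.val '' (t : Set s)) := by
  classical
  have union_mem {a b : α} (ha : a ∈ ⋃ t : Finset s, latticeClosure (Subtype.val '' (t : Set s)))
      (hb : b ∈ ⋃ t : Finset s, latticeClosure (Subtype.val '' (t : Set s))) :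
      ∃ t : Finset s, a ∈ latticeClosure (Subtype.val '' (t : Set s)) ∧
        b ∈ latticeClosure (Subtype.val '' (t : Set s)) := by
    obtain ⟨t, ht⟩ := mem_iUnion.1 ha
    obtain ⟨u, hu⟩ := mem_iUnion.1 hb
    refine ⟨t ∪ u, ?_, ?_⟩ <;> refine latticeClosure_mono (image_mono ?_) ‹_›
    exacts [Finset.coe_subset.2 Finset.subset_union_left,
      Finset.coe_subset.2 Finset.subset_union_right]
  intro a ha
  induction ha using latticeClosure_sup_inf_induction with
  | mem a ha => exact mem_iUnion.2 ⟨{⟨a, ha⟩}, subset_latticeClosure (by simp)⟩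
  | sup a _ b _ ha hb =>
    obtain ⟨t, hat, hbt⟩ := union_mem ha hb
    exact mem_iUnion.2 ⟨t, isSublattice_latticeClosure.supClosed hat hbt⟩
  | inf a _ b _ ha hb =>
    obtain ⟨t, hat, hbt⟩ := union_mem ha hb
    exact mem_iUnion.2 ⟨t, isSublattice_latticeClosure.infClosed hat hbt⟩

theorem Cardinal.mk_latticeClosure_le (s : Set α) : #(latticeClosure s) ≤ max ℵ₀ #s := by
  classical
  have hfin : ∀ t : Finset s, #(latticeClosure (Subtype.val '' (t : Set s))) ≤ ℵ₀ := fun t =>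
    ((t.finite_toSet.image _).latticeClosure.lt_aleph0).le
  have hfinset : #(Finset s) ≤ max ℵ₀ #s :=
    (mk_le_of_surjective List.toFinset_surjective).trans (mk_list_le_max _)
  calc #(latticeClosure s)
      ≤ #(⋃ t : Finset s, latticeClosure (Subtype.val '' (t : Set s))) :=
        mk_le_mk_of_subset (latticeClosure_subset_iUnion_finset s)
    _ ≤ #(Finset s) * ⨆ t : Finset s, #(latticeClosure (Subtype.val '' (t : Set s))) :=
        mk_iUnion_le _
    _ ≤ max ℵ₀ #s * ℵ₀ := mul_le_mul' hfinset (ciSup_le' hfin)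
    _ = max ℵ₀ #s := mul_aleph0_eq (le_max_left _ _)

end

lemma exists_sUnion_notMem_of_singleton_mem {X : Type*} {L : Set (Set X)}
    (hsingleton : ∀ x, {x} ∈ L) (hL : L ≠ univ) : ∃ S ⊆ L, ⋃₀ S ∉ L := by
  obtain ⟨W, hW⟩ := (ne_univ_iff_exists_notMem L).1 hL
  refine ⟨singleton '' W, image_subset_iff.2 fun x _ => hsingleton x, ?_⟩
  rwa [sUnion_image, biUnion_of_singleton]

theorem stmt6 {X : Type*} [Infinite X] (A : ℕ → Set X) :
    ∃ L : Set (Set X), (∅ : Set X) ∈ L ∧ Set.univ ∈ L ∧ (∀ i, A i ∈ L) ∧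
      (∀ a ∈ L, ∀ b ∈ L, a ∪ b ∈ L ∧ a ∩ b ∈ L) ∧
      ∃ S ⊆ L, ⋃₀ S ∉ L := by
  set C : Set (Set X) := insert ∅ (insert univ (range A))
  set L := latticeClosure (C ∪ range singleton)
  have hX : ℵ₀ ≤ #X := Cardinal.aleph0_le_mk X
  have hC : #C ≤ ℵ₀ := ((countable_range A).insert _ |>.insert _).le_aleph0
  have hL : #L < #(Set X) := calc
    #L ≤ max ℵ₀ #↑(C ∪ range singleton) := Cardinal.mk_latticeClosure_le _
    _ ≤ #X := max_le hX <| (Cardinal.mk_union_le _ _).trans <|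
        Cardinal.add_le_of_le hX (hC.trans hX) Cardinal.mk_range_le
    _ < #(Set X) := Cardinal.mk_set (α := X) ▸ Cardinal.cantor _
  have hgen : C ∪ range singleton ⊆ L := subset_latticeClosure
  refine ⟨L, hgen (by simp [C]), hgen (by simp [C]), fun i => hgen (by simp [C]),
    fun a ha b hb => ⟨isSublattice_latticeClosure.supClosed ha hb,
      isSublattice_latticeClosure.infClosed ha hb⟩,
    exists_sUnion_notMem_of_singleton_mem (fun x => hgen (Or.inr ⟨x, rfl⟩)) ?_⟩
  exact fun hLuniv => hL.ne (hLuniv ▸ Cardinal.mk_univ)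
end

section
/- Let X be an infinite set. Then Top(X), the set of all topologies on X viewed as a subset of 2^{P(X)}, is not a G_δ subset of 2^{P(X)}; that is, Top(X) is not a countable intersection of open subsets of 2^{P(X)}. -/
/-- `τ` is a topology on `X`: it contains `∅` and `X` and is closed under
pairwise intersections and arbitrary unions. -/
def IsTopologyOn {X : Type*} (τ : Set (Set X)) : Prop :=
  ∅ ∈ τ ∧ Set.univ ∈ τ ∧ (∀ a ∈ τ, ∀ b ∈ τ, a ∩ b ∈ τ) ∧ ∀ S ⊆ τ, ⋃₀ S ∈ τ

open scoped Topology

/-!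
Fix a strictly increasing chain `A 0 ⊂ A 1 ⊂ ⋯` of nonempty subsets of `X` whose union is not
all of `X`. To `S : ℕ → Bool` assign the family `{∅, X} ∪ {A n | S n}`; this map from Cantor
space into `2^{𝒫(X)}` is continuous, and its value is a topology exactly when `S` has finite
support, since otherwise the union of the chosen `A n` is missing. The finitely supported
sequences form a countable dense subset of Cantor space, so by the Baire category theorem they
are not a `Gδ`, and neither is `Top(X)`.
-/

open Set Function

theorem dense_of_forall_exists_eqOn {ι : Type*} {α : ι → Type*}
    [∀ i, TopologicalSpace (α i)] {s : Set (∀ i, α i)}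
    (h : ∀ (x : ∀ i, α i) (I : Finset ι), ∃ y ∈ s, ∀ i ∈ I, y i = x i) : Dense s := by
  rw [dense_iff_inter_open]
  rintro U hU ⟨x, hx⟩
  obtain ⟨I, u, hxu, hIU⟩ := isOpen_pi_iff.1 hU x hx
  obtain ⟨y, hys, hyx⟩ := h x I
  exact ⟨y, hIU fun i hi => (hyx i hi).symm ▸ (hxu i hi).2, hys⟩

def finiteSupport : Set (ℕ → Bool) := {S | {n | S n = true}.Finite}

theorem countable_finiteSupport : finiteSupport.Countable := by
  have hinj : Injective fun S : ℕ → Bool => {n | S n = true} := fun S T h =>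
    funext fun n => Bool.eq_iff_iff.2 (Set.ext_iff.1 h n)
  exact Countable.ofPred_finite.preimage_of_injOn hinj.injOn

theorem dense_finiteSupport : Dense finiteSupport :=
  dense_of_forall_exists_eqOn fun x I =>
    ⟨fun n => if n ∈ I then x n else false,
      I.finite_toSet.subset fun n hn => (by simpa using hn : n ∈ I ∧ x n = true).1,
      fun n hn => if_pos hn⟩

theorem dense_compl_finiteSupport : Dense finiteSupportᶜ :=
  dense_of_forall_exists_eqOn fun x I =>
    ⟨fun n => if n ∈ I then x n else true,
      fun hfin => I.finite_toSet.infinite_compl <| hfin.subset fun n hn => by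
        simp [Finset.mem_coe.not.1 hn],
      fun n hn => if_pos hn⟩

/-- The complement of a countable set is a `Gδ`, so Baire's theorem would make the dense sets
`finiteSupport` and `finiteSupportᶜ` meet. -/
theorem not_isGδ_finiteSupport : ¬ IsGδ finiteSupport := fun hG =>
  let ⟨_, hS, hSc⟩ := (dense_finiteSupport.inter_of_Gδ hG countable_finiteSupport.isGδ_compl
    dense_compl_finiteSupport).nonempty
  hSc hS

section Chain

variable {X : Type*} (A : ℕ → Set X)

def chainFamily (s : Set ℕ) : Set (Set X) := insert ∅ (insert univ (A '' s))

variable {A}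

theorem sUnion_image_eq_of_finite (hA : Monotone A) {s : Set ℕ} (hs : s.Finite)
    (hne : s.Nonempty) : ⋃₀ (A '' s) = A (sSup s) :=
  (sUnion_subset <| forall_mem_image.2 fun _ hn => hA (le_csSup hs.bddAbove hn)).antisymm
    (subset_sUnion_of_mem (mem_image_of_mem A (Nat.sSup_mem hne hs.bddAbove)))

theorem sUnion_image_eq_of_infinite (hA : Monotone A) {s : Set ℕ} (hs : s.Infinite) :
    ⋃₀ (A '' s) = ⋃ n, A n := by
  refine (sUnion_subset <| forall_mem_image.2 fun n _ => subset_iUnion A n).antisymm ?_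
  refine iUnion_subset fun n => ?_
  obtain ⟨m, hm, hnm⟩ := hs.exists_gt n
  exact (hA hnm.le).trans (subset_sUnion_of_mem (mem_image_of_mem A hm))

theorem isChain_chainFamily (hA : Monotone A) (s : Set ℕ) :
    IsChain (· ⊆ ·) (chainFamily A s) :=
  ((hA.isChain_range.mono (image_subset_range A s)).insert fun _ _ _ => .inr (subset_univ _))
    |>.insert fun _ _ _ => .inl (empty_subset _)

theorem sUnion_mem_chainFamily (hA : Monotone A) {s : Set ℕ} (hs : s.Finite)
    {T : Set (Set X)} (hT : T ⊆ chainFamily A s) : ⋃₀ T ∈ chainFamily A s := by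
  by_cases huniv : univ ∈ T
  · rw [eq_univ_of_univ_subset (subset_sUnion_of_mem huniv)]
    exact mem_insert_of_mem _ (mem_insert _ _)
  have hT' : ⋃₀ T = ⋃₀ (A '' {n ∈ s | A n ∈ T}) := by
    refine (sUnion_subset fun u hu x hx => ?_).antisymm
      (sUnion_mono (image_subset_iff.2 fun n hn => hn.2))
    rcases hT hu with rfl | rfl | ⟨n, hn, rfl⟩
    exacts [absurd hx (notMem_empty x), absurd hu huniv, ⟨A n, ⟨n, ⟨hn, hu⟩, rfl⟩, hx⟩]
  rw [hT']
  rcases eq_empty_or_nonempty {n ∈ s | A n ∈ T} with ht | ht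
  · rw [ht, image_empty, sUnion_empty]
    exact mem_insert _ _
  · have ht_fin : {n ∈ s | A n ∈ T}.Finite := hs.sep _
    rw [sUnion_image_eq_of_finite hA ht_fin ht]
    exact mem_insert_of_mem _ (mem_insert_of_mem _
      (mem_image_of_mem A (Nat.sSup_mem ht ht_fin.bddAbove).1))

theorem isTopologyOn_chainFamily (hA : Monotone A) {s : Set ℕ} (hs : s.Finite) :
    IsTopologyOn (chainFamily A s) := by
  refine ⟨mem_insert _ _, mem_insert_of_mem _ (mem_insert _ _), fun a ha b hb => ?_,
    fun T hT => sUnion_mem_chainFamily hA hs hT⟩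
  rcases (isChain_chainFamily hA s).total ha hb with h | h
  · rwa [inter_eq_left.2 h]
  · rwa [inter_eq_right.2 h]

theorem not_isTopologyOn_chainFamily (hA : StrictMono A) (h0 : (A 0).Nonempty)
    (hU : ⋃ n, A n ≠ univ) {s : Set ℕ} (hs : s.Infinite) :
    ¬ IsTopologyOn (chainFamily A s) := by
  intro hτ
  have := hτ.2.2.2 (A '' s) ((subset_insert _ _).trans (subset_insert _ _))
  rw [sUnion_image_eq_of_infinite hA.monotone hs] at this
  rcases this with h | h | ⟨n, -, hn⟩
  · exact h0.ne_empty (subset_empty_iff.1 (h ▸ subset_iUnion A 0))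
  · exact hU h
  · exact (hA (Nat.lt_succ_self n)).not_subset (hn ▸ subset_iUnion A (n + 1))

theorem isTopologyOn_chainFamily_iff (hA : StrictMono A) (h0 : (A 0).Nonempty)
    (hU : ⋃ n, A n ≠ univ) {s : Set ℕ} : IsTopologyOn (chainFamily A s) ↔ s.Finite :=
  ⟨fun hτ => not_not.1 fun hs => not_isTopologyOn_chainFamily hA h0 hU hs hτ,
    isTopologyOn_chainFamily hA.monotone⟩

theorem continuous_chainFamily (hA : Injective A) :
    Continuous[_, cantorTop X] fun S : ℕ → Bool => chainFamily A {n | S n = true} := by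
  have hpos (B : Set X) : IsClopen {S : ℕ → Bool | B ∈ chainFamily A {n | S n = true}} := by
    by_cases hB : B = ∅ ∨ B = univ
    · convert isClopen_univ
      exact eq_univ_of_forall fun S => by rcases hB with rfl | rfl <;> simp [chainFamily]
    have : {S : ℕ → Bool | B ∈ chainFamily A {n | S n = true}} =
        ⋃ n ∈ A ⁻¹' {B}, {S | S n = true} := by
      rw [not_or] at hB
      ext S
      simp [chainFamily, hB.1, hB.2, and_comm]
    rw [this]
    exact (subsingleton_singleton.preimage hA).finite.isClopen_biUnion fun n _ =>
      (isClopen_discrete {true}).preimage (continuous_apply n)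
  rw [cantorTop, continuous_generateFrom_iff]
  rintro U (⟨B, rfl⟩ | ⟨B, rfl⟩)
  exacts [(hpos B).isOpen, (hpos B).compl.isOpen]

end Chain

theorem exists_strictMono_nonempty_iUnion_ne_univ (X : Type*) [Infinite X] :
    ∃ A : ℕ → Set X, StrictMono A ∧ (A 0).Nonempty ∧ ⋃ n, A n ≠ univ := by
  let e := Infinite.natEmbedding X
  have he : Injective fun k => e (k + 1) := e.injective.comp (add_left_injective 1)
  refine ⟨fun n => (fun k => e (k + 1)) '' Iic n,
    he.image_strictMono.comp fun _ _ h => Iic_ssubset_Iic.2 h,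
    ⟨e 1, mem_image_of_mem _ (mem_Iic.2 le_rfl)⟩, fun h => ?_⟩
  obtain ⟨n, k, -, hk⟩ := mem_iUnion.1 (h ▸ mem_univ (e 0))
  exact Nat.succ_ne_zero k (e.injective hk)

theorem stmt7 {X : Type*} [Infinite X] :
    ¬ @IsGδ _ (cantorTop X) {τ : Set (Set X) | IsTopologyOn τ} := by
  let _ := cantorTop X
  intro h
  obtain ⟨A, hA, h0, hU⟩ := exists_strictMono_nonempty_iUnion_ne_univ X
  have hpre : (fun S : ℕ → Bool => chainFamily A {n | S n = true}) ⁻¹'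
      {τ | IsTopologyOn τ} = finiteSupport :=
    ext fun _ => isTopologyOn_chainFamily_iff hA h0 hU
  exact not_isGδ_finiteSupport (hpre ▸ h.preimage (continuous_chainFamily hA.injective))
end

section
/- Let X be an infinite set and let (O_n)_{n∈ℕ} be any countable family of open subsets of 2^{P(X)} each of which contains the discrete topology P(X) (the top element of 2^{P(X)}). Then ⋂_{n∈ℕ} O_n contains an element L ⊆ P(X) such that ∅, X ∈ L, L is closed under unions and intersections of pairs of its elements, but L is not a topology on X (L is not closed under arbitrary unions). In particular, no countable intersection of open sets containing the discrete topology is contained in Top(X). -/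
open scoped Topology

theorem cantorTop_exists_finite_of_univ_mem {X : Type*} {U : Set (Set (Set X))}
    (hU : IsOpen[cantorTop X] U) (huniv : Set.univ ∈ U) :
    ∃ F : Set (Set X), F.Finite ∧ ∀ y : Set (Set X), F ⊆ y → y ∈ U := by
  induction hU with
  | basic V hV =>
    rcases hV with ⟨A, rfl⟩ | ⟨A, rfl⟩
    · exact ⟨{A}, Set.finite_singleton A, fun y hy => hy rfl⟩
    · exact absurd trivial huniv
  | univ => exact ⟨∅, Set.finite_empty, fun _ _ => trivial⟩
  | inter _ _ _ _ ihV ihW =>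
    obtain ⟨F₁, hF₁, h₁⟩ := ihV huniv.1
    obtain ⟨F₂, hF₂, h₂⟩ := ihW huniv.2
    exact ⟨F₁ ∪ F₂, hF₁.union hF₂, fun y hy =>
      ⟨h₁ y (Set.union_subset_iff.mp hy).1, h₂ y (Set.union_subset_iff.mp hy).2⟩⟩
  | sUnion _ _ ih =>
    obtain ⟨V, hV, hV_univ⟩ := huniv
    obtain ⟨F, hF, hFV⟩ := ih V hV hV_univ
    exact ⟨F, hF, fun y hy => ⟨V, hV, hFV y hy⟩⟩

section FiniteSupInfs

variable {α : Type*} [DistribLattice α] [BoundedOrder α] {G : Set α} {a b : α}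

/-- By distributivity, this is the bounded sublattice generated by `G`. -/
def finiteSupInfs (G : Set α) : Set α :=
  Set.range fun 𝒯 : Finset (Finset G) => 𝒯.sup fun t => t.inf (↑)

theorem bot_mem_finiteSupInfs : ⊥ ∈ finiteSupInfs G := ⟨∅, Finset.sup_empty⟩

theorem top_mem_finiteSupInfs : ⊤ ∈ finiteSupInfs G := ⟨{∅}, by simp⟩

theorem subset_finiteSupInfs : G ⊆ finiteSupInfs G := fun g hg => ⟨{{⟨g, hg⟩}}, by simp⟩

theorem sup_mem_finiteSupInfs (ha : a ∈ finiteSupInfs G) (hb : b ∈ finiteSupInfs G) :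
    a ⊔ b ∈ finiteSupInfs G := by
  classical
  obtain ⟨𝒯₁, rfl⟩ := ha
  obtain ⟨𝒯₂, rfl⟩ := hb
  exact ⟨𝒯₁ ∪ 𝒯₂, Finset.sup_union⟩

theorem inf_mem_finiteSupInfs (ha : a ∈ finiteSupInfs G) (hb : b ∈ finiteSupInfs G) :
    a ⊓ b ∈ finiteSupInfs G := by
  classical
  obtain ⟨𝒯₁, rfl⟩ := ha
  obtain ⟨𝒯₂, rfl⟩ := hb
  refine ⟨(𝒯₁ ×ˢ 𝒯₂).image fun p => p.1 ∪ p.2, ?_⟩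
  simp only [Finset.sup_image, Finset.sup_inf_sup, Function.comp_def, Finset.inf_union]

theorem Set.Countable.finiteSupInfs (hG : G.Countable) : (finiteSupInfs G).Countable :=
  have := hG.to_subtype
  Set.countable_range _

end FiniteSupInfs

theorem Set.Infinite.not_countable_powerset {X : Type*} {D : Set X} (hD : D.Infinite) :
    ¬ (𝒫 D).Countable := by
  rw [← Cardinal.le_aleph0_iff_set_countable, Cardinal.mk_powerset, not_le]
  exact (Cardinal.infinite_iff.1 hD.to_subtype).trans_lt (Cardinal.cantor _)

theorem exists_sUnion_notMem_of_countable {X : Type*} {L : Set (Set X)} (hL : L.Countable)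
    {D : Set X} (hD : D.Infinite) (hsingleton : ∀ x ∈ D, {x} ∈ L) :
    ∃ S ⊆ L, ⋃₀ S ∉ L := by
  by_contra! hclosed
  refine hD.not_countable_powerset (hL.mono fun T hT => ?_)
  have hT_L : (fun x => {x}) '' T ⊆ L := by
    rintro _ ⟨x, hx, rfl⟩
    exact hsingleton x (hT hx)
  simpa only [Set.sUnion_image, Set.biUnion_of_singleton] using hclosed _ hT_L

theorem stmt8 {X : Type*} [Infinite X] (O : ℕ → Set (Set (Set X)))
    (hopen : ∀ n, IsOpen[cantorTop X] (O n))
    (hmem : ∀ n, (Set.univ : Set (Set X)) ∈ O n) :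
    ∃ L ∈ ⋂ n, O n, (∅ : Set X) ∈ L ∧ Set.univ ∈ L ∧
      (∀ a ∈ L, ∀ b ∈ L, a ∪ b ∈ L ∧ a ∩ b ∈ L) ∧ ¬ IsTopologyOn L ∧ ∃ S ⊆ L, ⋃₀ S ∉ L := by
  choose F hF_finite hF using fun n => cantorTop_exists_finite_of_univ_mem (hopen n) (hmem n)
  set D := Set.range (Infinite.natEmbedding X)
  set L := finiteSupInfs ((⋃ n, F n) ∪ (fun x => {x}) '' D)
  have hL_countable : L.Countable :=
    ((Set.countable_iUnion fun n => (hF_finite n).countable).union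
      ((Set.countable_range _).image _)).finiteSupInfs
  have hL_mem : L ∈ ⋂ n, O n := Set.mem_iInter.2 fun n =>
    hF n L fun A hA => subset_finiteSupInfs (.inl (Set.mem_iUnion.2 ⟨n, hA⟩))
  obtain ⟨S, hSL, hS⟩ := exists_sUnion_notMem_of_countable hL_countable
    (Set.infinite_range_of_injective (Infinite.natEmbedding X).injective)
    fun x hx => subset_finiteSupInfs (.inr ⟨x, hx, rfl⟩)
  exact ⟨L, hL_mem, bot_mem_finiteSupInfs, top_mem_finiteSupInfs,
    fun a ha b hb => ⟨sup_mem_finiteSupInfs ha hb, inf_mem_finiteSupInfs ha hb⟩,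
    fun hτ => hS (hτ.2.2.2 S hSL), S, hSL, hS⟩
end

section
/- Let X be a set and let T be an infinite collection of atoms of Top(X), i.e., of topologies of the form {∅, A, X} with A a nonempty proper subset of X. Then the topological closure of T in 2^{P(X)} equals T ∪ {I}, where I = {∅, X} is the trivial (indiscrete) topology on X. -/
open scoped Topology

open Set

namespace CantorCube

variable {X : Type*}

lemma isOpen_setOf_mem (A : Set X) : IsOpen[cantorTop X] {x | A ∈ x} :=
  TopologicalSpace.isOpen_generateFrom_of_mem (Or.inl ⟨A, rfl⟩)

lemma isOpen_setOf_notMem (A : Set X) : IsOpen[cantorTop X] {x | A ∉ x} :=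
  TopologicalSpace.isOpen_generateFrom_of_mem (Or.inr ⟨A, rfl⟩)

lemma isOpen_setOf_agreeOn (x : Set (Set X)) {F : Set (Set X)} (hF : F.Finite) :
    IsOpen[cantorTop X] {y | ∀ A ∈ F, (A ∈ y ↔ A ∈ x)} := by
  let _ := cantorTop X
  simp only [ofPred_forall]
  refine hF.isOpen_biInter fun A _ => ?_
  by_cases hA : A ∈ x
  · simpa [hA] using isOpen_setOf_mem A
  · simpa [hA] using isOpen_setOf_notMem A

theorem mem_closure_iff_agreeOn {S : Set (Set (Set X))} {x : Set (Set X)} :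
    x ∈ closure[cantorTop X] S ↔
      ∀ F : Set (Set X), F.Finite → ∃ y ∈ S, ∀ A ∈ F, (A ∈ y ↔ A ∈ x) := by
  let _ := cantorTop X
  constructor
  · intro hx F hF
    obtain ⟨y, hyF, hyS⟩ :=
      mem_closure_iff.1 hx _ (isOpen_setOf_agreeOn x hF) fun _ _ => Iff.rfl
    exact ⟨y, hyS, hyF⟩
  · intro h
    rw [(TopologicalSpace.isTopologicalBasis_of_subbasis (rfl : cantorTop X = _)).mem_closure_iff]
    rintro _ ⟨f, ⟨hf, hfg⟩, rfl⟩ hx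
    have hsub : ∀ u ∈ f, ∃ A : Set X, u = {y | A ∈ y} ∨ u = {y | A ∉ y} := by
      intro u hu
      rcases hfg hu with ⟨A, rfl⟩ | ⟨A, rfl⟩
      exacts [⟨A, Or.inl rfl⟩, ⟨A, Or.inr rfl⟩]
    choose A hA using hsub
    obtain ⟨y, hyS, hy⟩ := h _ (hf.dependent_image A)
    refine ⟨y, fun u hu => ?_, hyS⟩
    have hxu := hx u hu
    have hyx := hy (A u hu) ⟨u, hu, rfl⟩
    rcases hA u hu with hu' | hu' <;> rw [hu'] at hxu ⊢
    exacts [hyx.2 hxu, fun hyA => hxu (hyx.1 hyA)]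

end CantorCube

open CantorCube

section Atoms

variable {X : Type*}

lemma eq_of_mem_atom {A B : Set X} (hB : B ∈ ({∅, A, univ} : Set (Set X))) (hB0 : B ≠ ∅)
    (hB1 : B ≠ univ) : B = A := by
  simp_all

lemma mem_union_trivial_of_mem_closure_atoms {T : Set (Set (Set X))}
    (hatom : ∀ τ ∈ T, ∃ A : Set X, τ = {∅, A, univ}) {x : Set (Set X)}
    (hx : x ∈ closure[cantorTop X] T) : x ∈ T ∪ {{∅, univ}} := by
  rw [mem_closure_iff_agreeOn] at hx
  have hbounds : ∅ ∈ x ∧ univ ∈ x := by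
    obtain ⟨τ, hτT, hτ⟩ := hx {∅, univ} (toFinite _)
    obtain ⟨A, rfl⟩ := hatom τ hτT
    exact ⟨(hτ ∅ (by simp)).1 (by simp), (hτ univ (by simp)).1 (by simp)⟩
  by_cases hI : x ⊆ {∅, univ}
  · exact Or.inr (hI.antisymm (by simp [insert_subset_iff, hbounds]))
  obtain ⟨B, hBx, hB⟩ := not_subset.1 hI
  have hB0 : B ≠ ∅ := fun h => hB (Or.inl h)
  have hB1 : B ≠ univ := fun h => hB (Or.inr h)
  have hatomB : ∀ C ∈ x, {∅, B, univ} ∈ T ∧ C ∈ ({∅, B, univ} : Set (Set X)) := by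
    intro C hC
    obtain ⟨τ, hτT, hτ⟩ := hx {B, C} (toFinite _)
    obtain ⟨A, rfl⟩ := hatom τ hτT
    obtain rfl := eq_of_mem_atom ((hτ B (by simp)).2 hBx) hB0 hB1
    exact ⟨hτT, (hτ C (by simp)).2 hC⟩
  have hxB : x = {∅, B, univ} :=
    subset_antisymm (fun C hC => (hatomB C hC).2) (by simp [insert_subset_iff, hbounds, hBx])
  exact Or.inl (hxB ▸ (hatomB B hBx).1)

lemma trivial_mem_closure_of_infinite_atoms {T : Set (Set (Set X))} (hT : T.Infinite)
    (hatom : ∀ τ ∈ T, ∃ A : Set X, τ = {∅, A, univ}) :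
    {∅, univ} ∈ closure[cantorTop X] T := by
  rw [mem_closure_iff_agreeOn]
  intro F hF
  choose! A hτA using hatom
  have hAT : (A '' T).Infinite :=
    hT.image fun τ hτ σ hσ h => by rw [hτA τ hτ, hτA σ hσ, h]
  obtain ⟨_, ⟨τ, hτT, rfl⟩, hτF⟩ := (hAT.sdiff hF).nonempty
  refine ⟨τ, hτT, fun B hB => ?_⟩
  have hBA : B ≠ A τ := fun h => hτF (h ▸ hB)
  rw [hτA τ hτT]
  simp [hBA]

end Atoms

theorem stmt11 {X : Type*} (T : Set (Set (Set X))) (hT : T.Infinite)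
    (hatom : ∀ τ ∈ T, ∃ A : Set X, A ≠ ∅ ∧ A ≠ Set.univ ∧ τ = {∅, A, Set.univ}) :
    @closure _ (cantorTop X) T = T ∪ {{∅, Set.univ}} := by
  have hshape : ∀ τ ∈ T, ∃ A : Set X, τ = {∅, A, univ} := fun τ hτ =>
    (hatom τ hτ).imp fun _ hA => hA.2.2
  exact subset_antisymm (fun _ hx => mem_union_trivial_of_mem_closure_atoms hshape hx)
    (union_subset (@subset_closure _ (cantorTop X) T)
      (singleton_subset_iff.2 (trivial_mem_closure_of_infinite_atoms hT hshape)))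
end

section
/- Let X be a set and let T be an infinite collection of atoms of Top(X), i.e., of topologies of the form {∅, A, X} with A a nonempty proper subset of X, and let I = {∅, X} be the trivial topology. Then the subspace T ∪ {I} of 2^{P(X)} is homeomorphic to the one-point compactification of the discrete space T: the map from OnePoint(T) (T taken with the discrete topology) to the subspace T ∪ {I} sending each τ ∈ T to itself and the point at infinity to I is a homeomorphism. -/
open scoped Topology

/-- The one-point compactification of the type `D` taken with the discrete topology. -/
def onePointDiscreteTop (D : Type*) : TopologicalSpace (OnePoint D) :=
  letI : TopologicalSpace D := ⊥
  inferInstance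

open Filter Set

section CantorCube

variable {X : Type*}

lemma cantorTop_isOpen_setOf_mem (A : Set X) : IsOpen[cantorTop X] {x | A ∈ x} :=
  .basic _ (.inl ⟨A, rfl⟩)

lemma cantorTop_isOpen_setOf_notMem (A : Set X) : IsOpen[cantorTop X] {x | A ∉ x} :=
  .basic _ (.inr ⟨A, rfl⟩)

lemma cantorTop_t2Space : @T2Space _ (cantorTop X) := by
  let _ := cantorTop X
  refine ⟨fun x y hxy => ?_⟩
  obtain ⟨A, hA⟩ : ∃ A, ¬(A ∈ x ↔ A ∈ y) := not_forall.1 (mt Set.ext hxy)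
  by_cases hx : A ∈ x
  · exact ⟨_, _, cantorTop_isOpen_setOf_mem A, cantorTop_isOpen_setOf_notMem A, hx,
      fun hy => hA (iff_of_true hx hy), Set.disjoint_left.2 fun _ h h' => h' h⟩
  · exact ⟨_, _, cantorTop_isOpen_setOf_notMem A, cantorTop_isOpen_setOf_mem A, hx,
      not_not.1 fun hy => hA (iff_of_false hx hy), Set.disjoint_left.2 fun _ h h' => h h'⟩

lemma cantorTop_tendsto_nhds_iff {ι : Type*} {l : Filter ι} {f : ι → Set (Set X)}
    {y : Set (Set X)} :
    Tendsto f l (@nhds _ (cantorTop X) y) ↔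
      (∀ A ∈ y, ∀ᶠ i in l, A ∈ f i) ∧ ∀ A ∉ y, ∀ᶠ i in l, A ∉ f i := by
  rw [cantorTop, TopologicalSpace.tendsto_nhds_generateFrom_iff]
  simp only [mem_union, mem_ofPred_eq, or_imp, forall_and, forall_exists_index,
    forall_eq_apply_imp_iff]
  rfl

end CantorCube

section Atoms

variable {X : Type*}

lemma mem_atom_iff {A B : Set X} (hB : B ∉ ({∅, Set.univ} : Set (Set X))) :
    B ∈ ({∅, A, Set.univ} : Set (Set X)) ↔ B = A := by
  simp only [mem_insert_iff, mem_singleton_iff, not_or] at hB ⊢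
  tauto

lemma trivial_notMem_of_forall_atom {T : Set (Set (Set X))}
    (hatom : ∀ τ ∈ T, ∃ A : Set X, A ≠ ∅ ∧ A ≠ Set.univ ∧ τ = {∅, A, Set.univ}) :
    ({∅, Set.univ} : Set (Set X)) ∉ T := by
  intro hI
  obtain ⟨A, hA0, hAu, hτ⟩ := hatom _ hI
  have hA : A ∈ ({∅, Set.univ} : Set (Set X)) := hτ ▸ Or.inr (Or.inl rfl)
  rcases hA with h | h
  exacts [hA0 h, hAu h]

lemma tendsto_atoms_cofinite_nhds_trivial {T : Set (Set (Set X))}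
    (hatom : ∀ τ ∈ T, ∃ A : Set X, A ≠ ∅ ∧ A ≠ Set.univ ∧ τ = {∅, A, Set.univ}) :
    Tendsto (Subtype.val : T → Set (Set X)) cofinite
      (@nhds _ (cantorTop X) {∅, Set.univ}) := by
  refine cantorTop_tendsto_nhds_iff.2
    ⟨fun A hA => Eventually.of_forall fun τ => ?_, fun A hA => ?_⟩
  · obtain ⟨B, -, -, hτ⟩ := hatom τ τ.2
    rw [hτ]
    rcases hA with rfl | rfl <;> simp
  · have hsub : {τ : T | A ∈ τ.1}.Subsingleton := by
      intro τ₁ h₁ τ₂ h₂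
      obtain ⟨B₁, -, -, hτ₁⟩ := hatom τ₁ τ₁.2
      obtain ⟨B₂, -, -, hτ₂⟩ := hatom τ₂ τ₂.2
      rw [mem_ofPred_eq, hτ₁, mem_atom_iff hA] at h₁
      rw [mem_ofPred_eq, hτ₂, mem_atom_iff hA] at h₂
      exact Subtype.ext (by rw [hτ₁, hτ₂, ← h₁, ← h₂])
    simpa only [eventually_cofinite, not_not] using hsub.finite

end Atoms

noncomputable def onePointEquivUnionSingleton {α : Type*} {s : Set α} {b : α} (hb : b ∉ s) :
    OnePoint s ≃ ↥(s ∪ {b}) :=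
  Equiv.ofBijective (fun z => z.elim ⟨b, Or.inr rfl⟩ fun x => ⟨x, Or.inl x.2⟩) <| by
    refine ⟨fun z₁ z₂ h => ?_, ?_⟩
    · induction z₁ using OnePoint.rec <;> induction z₂ using OnePoint.rec <;>
        simp only [OnePoint.elim_infty, OnePoint.elim_some, Subtype.ext_iff] at h
      · rfl
      · exact absurd (h ▸ Subtype.prop _) hb
      · exact absurd (h ▸ Subtype.prop _) hb
      · exact congrArg _ (Subtype.ext h)
    · rintro ⟨y, hy | rfl⟩
      exacts [⟨(⟨y, hy⟩ : s), rfl⟩, ⟨OnePoint.infty, rfl⟩]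

theorem stmt12_general {X : Type*} (T : Set (Set (Set X)))
    (hatom : ∀ τ ∈ T, ∃ A : Set X, A ≠ ∅ ∧ A ≠ Set.univ ∧ τ = {∅, A, Set.univ}) :
    ∃ f : @Homeomorph (OnePoint ↥T) ↥(T ∪ {{∅, Set.univ}})
        (onePointDiscreteTop ↥T)
        (TopologicalSpace.induced Subtype.val (cantorTop X)),
      (∀ τ : ↥T, ((f (↑τ : OnePoint ↥T) : ↥(T ∪ {{∅, Set.univ}})) : Set (Set X)) = ↑τ) ∧
      ((f OnePoint.infty : ↥(T ∪ {{∅, Set.univ}})) : Set (Set X)) = {∅, Set.univ} := by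
  let _ : TopologicalSpace T := ⊥
  have : DiscreteTopology T := ⟨rfl⟩
  let _ := cantorTop X
  have : T2Space (Set (Set X)) := cantorTop_t2Space
  let e := onePointEquivUnionSingleton (trivial_notMem_of_forall_atom hatom)
  have he : Continuous e := (OnePoint.continuous_iff_from_discrete e).2 <|
    tendsto_subtype_rng.2 (tendsto_atoms_cofinite_nhds_trivial hatom)
  exact ⟨he.homeoOfEquivCompactToT2, fun _ => rfl, rfl⟩

theorem stmt12 {X : Type*} (T : Set (Set (Set X))) (hT : T.Infinite)
    (hatom : ∀ τ ∈ T, ∃ A : Set X, A ≠ ∅ ∧ A ≠ Set.univ ∧ τ = {∅, A, Set.univ}) :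
    ∃ f : @Homeomorph (OnePoint ↥T) ↥(T ∪ {{∅, Set.univ}})
        (onePointDiscreteTop ↥T)
        (TopologicalSpace.induced Subtype.val (cantorTop X)),
      (∀ τ : ↥T, ((f (↑τ : OnePoint ↥T) : ↥(T ∪ {{∅, Set.univ}})) : Set (Set X)) = ↑τ) ∧
      ((f OnePoint.infty : ↥(T ∪ {{∅, Set.univ}})) : Set (Set X)) = {∅, Set.univ} :=
  stmt12_general T hatom
end
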